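/- arXiv:0907.1103 — 5 statements merged into one kernel-verified Lean document; each statement's English description precedes it below -/
import Mathlib

section
/- For every ε > 0 there exists a positive integer m₀ such that for all m ≥ m₀ and all Δ ∈ {1, …, m−1}, we have 2·h_m − h_Δ − h_{m−Δ} ≥ ln 2 − ε. -/
/-!
Write `h_m = ∑ pᵢ (-log pᵢ)` with `pᵢ = C(m,i) / 2^m`. By Stirling's formula, in the bulk
`|i - m/2| ≤ m/4` the surprisal `-log pᵢ` is `½ log (πm/2) + 2 (i - m/2)² / m`, the surprisal of
the Gaussian `N(m/2, m/4)`, up to `O((i - m/2)⁴/m³ + (i - m/2)²/m²) + o(1)`; in the tails both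
quantities are `O(m)`, which is again `O((i - m/2)⁴/m³)`. Averaging against the binomial moments
`E (i - m/2)² = m/4` and `E (i - m/2)⁴ = (3m² - 2m)/16` gives `h_m = ½ log (πem/2) + o(1)`.

Hence, if `Δ` and `m - Δ` are both large, `2h_m - h_Δ - h_{m-Δ} = log m - ½ log (Δ (m - Δ)) + o(1)`,
which is at least `log 2 + o(1)` by AM-GM. If one of them, say `Δ`, stays bounded, then so does
`h_Δ`, while `2h_m - h_{m-Δ} ≥ ½ log m + O(1)` tends to infinity.
-/

/-- `binEnt m` is the Shannon entropy (in nats) of the binomial distribution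
`Binomial(m, 1/2)`: `h_m = -∑_{i=0}^m binom(m,i) 2^{-m} ln(binom(m,i) 2^{-m})`. -/
noncomputable def binEnt (m : ℕ) : ℝ :=
  -∑ i ∈ Finset.range (m + 1),
      ((m.choose i : ℝ) / 2 ^ m) * Real.log ((m.choose i : ℝ) / 2 ^ m)

open Real Filter Finset Topology
open scoped Nat

-- `2i - m` is the endpoint of a `±1` walk of length `m` with `i` up-steps;
-- one more step moves it by `±1`.
lemma sum_choose_succ_mul_apply_two_mul_sub (m : ℕ) (f : ℝ → ℝ) :
    ∑ i ∈ range (m + 2), ((m + 1).choose i : ℝ) * f (2 * i - (m + 1)) =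
      ∑ i ∈ range (m + 1), (m.choose i : ℝ) * (f (2 * i - m - 1) + f (2 * i - m + 1)) := by
  rw [Finset.sum_choose_succ_mul (fun i _ ↦ f (2 * i - (m + 1))), ← sum_add_distrib]
  refine sum_congr rfl fun i _ ↦ ?_
  push_cast
  ring_nf

lemma sum_choose_mul_sq (m : ℕ) :
    ∑ i ∈ range (m + 1), (m.choose i : ℝ) * (2 * i - m) ^ 2 = (m : ℝ) * 2 ^ m := by
  induction m with
  | zero => simp
  | succ m ih =>
    push_cast
    rw [sum_choose_succ_mul_apply_two_mul_sub m (· ^ 2)]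
    have h : ∀ i ∈ range (m + 1), (m.choose i : ℝ) * ((2 * i - m - 1) ^ 2 + (2 * i - m + 1) ^ 2)
        = 2 * ((m.choose i : ℝ) * (2 * i - m) ^ 2) + 2 * m.choose i :=
      fun i _ ↦ by ring
    rw [sum_congr rfl h, sum_add_distrib, ← mul_sum, ← mul_sum, ih, ← Nat.cast_sum,
      Nat.sum_range_choose]
    push_cast
    ring

lemma sum_choose_mul_pow_four (m : ℕ) :
    ∑ i ∈ range (m + 1), (m.choose i : ℝ) * (2 * i - m) ^ 4
      = (3 * (m : ℝ) ^ 2 - 2 * m) * 2 ^ m := by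
  induction m with
  | zero => simp
  | succ m ih =>
    push_cast
    rw [sum_choose_succ_mul_apply_two_mul_sub m (· ^ 4)]
    have h : ∀ i ∈ range (m + 1), (m.choose i : ℝ) * ((2 * i - m - 1) ^ 4 + (2 * i - m + 1) ^ 4)
        = 2 * ((m.choose i : ℝ) * (2 * i - m) ^ 4) + 12 * ((m.choose i : ℝ) * (2 * i - m) ^ 2)
          + 2 * m.choose i :=
      fun i _ ↦ by ring
    rw [sum_congr rfl h, sum_add_distrib, sum_add_distrib, ← mul_sum, ← mul_sum, ← mul_sum, ih,
      sum_choose_mul_sq, ← Nat.cast_sum, Nat.sum_range_choose]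
    push_cast
    ring

noncomputable def binomProb (m i : ℕ) : ℝ := m.choose i / 2 ^ m

lemma binomProb_pos {m i : ℕ} (h : i ≤ m) : 0 < binomProb m i := by
  unfold binomProb
  have := Nat.choose_pos h
  positivity

lemma binEnt_eq_sum (m : ℕ) :
    binEnt m = ∑ i ∈ range (m + 1), binomProb m i * -log (binomProb m i) := by
  simp only [binEnt, binomProb, mul_neg, sum_neg_distrib]

lemma sum_binomProb (m : ℕ) : ∑ i ∈ range (m + 1), binomProb m i = 1 := by
  simp only [binomProb, ← sum_div, ← Nat.cast_sum, Nat.sum_range_choose]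
  push_cast
  exact div_self (by positivity)

lemma sum_binomProb_mul_sq (m : ℕ) :
    ∑ i ∈ range (m + 1), binomProb m i * ((i : ℝ) - m / 2) ^ 2 = (m : ℝ) / 4 := by
  calc ∑ i ∈ range (m + 1), binomProb m i * ((i : ℝ) - m / 2) ^ 2
      = (∑ i ∈ range (m + 1), (m.choose i : ℝ) * (2 * i - m) ^ 2) / (4 * 2 ^ m) := by
        rw [sum_div]
        exact sum_congr rfl fun i _ ↦ by unfold binomProb; field_simp; ring
    _ = (m : ℝ) / 4 := by rw [sum_choose_mul_sq]; field_simp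

lemma sum_binomProb_mul_pow_four (m : ℕ) :
    ∑ i ∈ range (m + 1), binomProb m i * ((i : ℝ) - m / 2) ^ 4
      = (3 * (m : ℝ) ^ 2 - 2 * m) / 16 := by
  calc ∑ i ∈ range (m + 1), binomProb m i * ((i : ℝ) - m / 2) ^ 4
      = (∑ i ∈ range (m + 1), (m.choose i : ℝ) * (2 * i - m) ^ 4) / (16 * 2 ^ m) := by
        rw [sum_div]
        exact sum_congr rfl fun i _ ↦ by unfold binomProb; field_simp; ring
    _ = (3 * (m : ℝ) ^ 2 - 2 * m) / 16 := by rw [sum_choose_mul_pow_four]; field_simp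

noncomputable def stirlingErr (n : ℕ) : ℝ :=
  log n ! - (n * log n - n + log (2 * π * n) / 2)

lemma tendsto_stirlingErr : Tendsto stirlingErr atTop (𝓝 0) := by
  have h := ((continuousAt_log (sqrt_pos.2 pi_pos).ne').tendsto.comp
    Stirling.tendsto_stirlingSeq_sqrt_pi).sub_const (log √π)
  rw [sub_self] at h
  refine h.congr' ((eventually_ne_atTop 0).mono fun n hn ↦ ?_)
  have hn' : (n : ℝ) ≠ 0 := Nat.cast_ne_zero.2 hn
  simp only [Function.comp_apply, Stirling.log_stirlingSeq_formula, stirlingErr,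
    log_sqrt pi_pos.le, log_div hn' (exp_ne_zero 1), log_exp,
    log_mul (mul_ne_zero two_ne_zero pi_ne_zero) hn', log_mul two_ne_zero pi_ne_zero,
    log_mul two_ne_zero hn']
  ring

lemma abs_log_one_add_sub_le {x : ℝ} (hx : |x| ≤ 1 / 2) :
    |log (1 + x) - (x - x ^ 2 / 2 + x ^ 3 / 3)| ≤ 2 * x ^ 4 := by
  have h := abs_log_sub_add_sum_range_le (x := -x) (by rw [abs_neg]; linarith) 3
  norm_num [sum_range_succ] at h
  calc |log (1 + x) - (x - x ^ 2 / 2 + x ^ 3 / 3)|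
      = |-x + x ^ 2 / 2 + (-x) ^ 3 / 3 + log (1 + x)| := by ring_nf
    _ ≤ |x| ^ 4 / (1 - |x|) := h
    _ ≤ 2 * |x| ^ 4 := by
        rw [div_le_iff₀ (by linarith)]
        nlinarith [pow_nonneg (abs_nonneg x) 4]
    _ = 2 * x ^ 4 := by rw [pow_abs, abs_of_nonneg (by positivity)]

lemma abs_log_two_sub_binEntropy_sub_le {p : ℝ} (hp : |p - 1 / 2| ≤ 1 / 4) :
    |log 2 - binEntropy p - 2 * (p - 1 / 2) ^ 2| ≤ 38 * (p - 1 / 2) ^ 4 := by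
  set x := 2 * p - 1 with hx
  have hx2 : |x| ≤ 1 / 2 := by
    rw [hx, show 2 * p - 1 = 2 * (p - 1 / 2) by ring, abs_mul]; norm_num; linarith
  have hx1 := abs_le.1 hx2
  have hplus := abs_le.1 (abs_log_one_add_sub_le hx2)
  have hminus := abs_le.1 (abs_log_one_add_sub_le (x := -x) (by rwa [abs_neg]))
  have hent : log 2 - binEntropy p = ((1 + x) * log (1 + x) + (1 - x) * log (1 + -x)) / 2 := by
    have e1 : 1 - p = (1 + -x) / 2 := by rw [hx]; ring
    have e2 : p = (1 + x) / 2 := by rw [hx]; ring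
    rw [binEntropy, e1, e2, inv_div, inv_div, log_div two_ne_zero (by linarith),
      log_div two_ne_zero (by linarith)]
    ring
  have hp' : p - 1 / 2 = x / 2 := by rw [hx]; ring
  rw [hent, hp', abs_le]
  constructor <;> nlinarith [mul_le_mul_of_nonneg_left hplus.1 (by linarith : (0 : ℝ) ≤ 1 + x),
    mul_le_mul_of_nonneg_left hplus.2 (by linarith : (0 : ℝ) ≤ 1 + x),
    mul_le_mul_of_nonneg_left hminus.1 (by linarith : (0 : ℝ) ≤ 1 - x),
    mul_le_mul_of_nonneg_left hminus.2 (by linarith : (0 : ℝ) ≤ 1 - x), pow_two_nonneg (x ^ 2)]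

lemma neg_log_binomProb_add {i j : ℕ} (hi : 0 < i) (hj : 0 < j) :
    -log (binomProb (i + j) i) = (i + j) * (log 2 - binEntropy (i / (i + j)))
      + log (2 * π * i * j / (i + j)) / 2
      + stirlingErr i + stirlingErr j - stirlingErr (i + j) := by
  have hi' : (0 : ℝ) < i := Nat.cast_pos.2 hi
  have hj' : (0 : ℝ) < j := Nat.cast_pos.2 hj
  have hlogFact : ∀ k : ℕ, log k ! = k * log k - k + log (2 * π * k) / 2 + stirlingErr k :=
    fun k ↦ by rw [stirlingErr]; ring
  have hent :
      binEntropy (i / (i + j)) = (i * log ((i + j) / i) + j * log ((i + j) / j)) / (i + j) := by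
    rw [binEntropy, show (1 : ℝ) - i / (i + j) = j / (i + j) by field_simp; ring, inv_div, inv_div]
    field_simp
  have hfact : ∀ k : ℕ, (k ! : ℝ) ≠ 0 := fun k ↦ Nat.cast_ne_zero.2 k.factorial_ne_zero
  have hfact₂ : ∀ k l : ℕ, (k ! * l ! : ℝ) ≠ 0 := fun k l ↦ mul_ne_zero (hfact k) (hfact l)
  rw [binomProb, Nat.cast_add_choose, log_div (div_ne_zero (hfact _) (hfact₂ _ _)) (by positivity),
    log_div (hfact _) (hfact₂ _ _), log_mul (hfact _) (hfact _), log_pow, hlogFact, hlogFact,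
    hlogFact, hent]
  have hlog : log (2 * π * i * j / (i + j)) = log 2 + log π + log i + log j - log (i + j) := by
    rw [log_div (by positivity) (by positivity), log_mul (by positivity) hj'.ne',
      log_mul (by positivity) hi'.ne', log_mul two_ne_zero pi_ne_zero]
  push_cast
  rw [hlog, log_div (by positivity) hi'.ne', log_div (by positivity) hj'.ne',
    log_mul (by positivity) hi'.ne', log_mul (by positivity) hj'.ne',
    log_mul (by positivity) (by positivity), log_mul two_ne_zero pi_ne_zero]
  field_simp
  ring

-- `-log` of the density of `N(m/2, m/4)` at `i`
noncomputable def gaussApprox (m i : ℕ) : ℝ := log (π * m / 2) / 2 + 2 * ((i : ℝ) - m / 2) ^ 2 / m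

lemma abs_log_one_sub_le {y : ℝ} (h0 : 0 ≤ y) (h1 : y ≤ 1 / 2) : |log (1 - y)| ≤ 2 * y := by
  have h := abs_log_sub_add_sum_range_le (x := y) (by rw [abs_of_nonneg h0]; linarith) 0
  rw [sum_range_zero, zero_add, pow_one, abs_of_nonneg h0] at h
  refine h.trans ?_
  rw [div_le_iff₀ (by linarith)]
  nlinarith

lemma abs_neg_log_binomProb_sub_gaussApprox_le_of_near {M m i j : ℕ} {δ : ℝ}
    (hδ : ∀ k ≥ M, |stirlingErr k| ≤ δ) (hM : 0 < M) (hi : M ≤ i) (hj : M ≤ j) (hm : i + j = m)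
    (hnear : |(i : ℝ) - m / 2| ≤ m / 4) :
    |-log (binomProb m i) - gaussApprox m i|
      ≤ 38 * ((i : ℝ) - m / 2) ^ 4 / m ^ 3 + 4 * ((i : ℝ) - m / 2) ^ 2 / m ^ 2 + 3 * δ := by
  subst hm
  have hi0 : (0 : ℝ) < i := Nat.cast_pos.2 (hM.trans_le hi)
  have hj0 : (0 : ℝ) < j := Nat.cast_pos.2 (hM.trans_le hj)
  push_cast at hnear ⊢
  set n : ℝ := i + j with hn
  set s : ℝ := (i - n / 2) / n with hs
  have hn0 : 0 < n := by positivity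
  have hs4 : |s| ≤ 1 / 4 := by rw [hs, abs_div, abs_of_pos hn0, div_le_iff₀ hn0]; linarith
  have hs2 : 4 * s ^ 2 ≤ 1 / 4 := by nlinarith [sq_abs s, abs_nonneg s]
  have hprod : 2 * π * i * j / n = π * n / 2 * (1 - 4 * s ^ 2) := by
    rw [hs, hn]; field_simp; ring
  have hps : (i : ℝ) / n - 1 / 2 = s := by rw [hs]; field_simp
  have hA := abs_log_two_sub_binEntropy_sub_le (p := i / n) (hps ▸ hs4)
  rw [hps] at hA
  have hB := abs_log_one_sub_le (y := 4 * s ^ 2) (by positivity) (by linarith)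
  have hC : |stirlingErr i + stirlingErr j - stirlingErr (i + j)| ≤ 3 * δ := by
    have h1 := abs_le.1 (hδ i hi)
    have h2 := abs_le.1 (hδ j hj)
    have h3 := abs_le.1 (hδ (i + j) (by omega))
    rw [abs_le]
    constructor <;> linarith
  have key : -log (binomProb (i + j) i) - gaussApprox (i + j) i
      = n * (log 2 - binEntropy (i / n) - 2 * s ^ 2) + log (1 - 4 * s ^ 2) / 2
        + (stirlingErr i + stirlingErr j - stirlingErr (i + j)) := by
    have hquad : 2 * ((i : ℝ) - n / 2) ^ 2 / n = n * (2 * s ^ 2) := by rw [hs]; field_simp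
    rw [neg_log_binomProb_add (Nat.cast_pos.1 hi0) (Nat.cast_pos.1 hj0), ← hn, hprod,
      log_mul (by positivity) (by linarith), gaussApprox]
    push_cast
    rw [← hn]
    linear_combination (-1 : ℝ) * hquad
  have h4 : 38 * ((i : ℝ) - n / 2) ^ 4 / n ^ 3 = n * (38 * s ^ 4) := by rw [hs]; field_simp
  have h2 : 4 * ((i : ℝ) - n / 2) ^ 2 / n ^ 2 = 2 * (4 * s ^ 2) / 2 := by rw [hs]; field_simp
  rw [key, h4, h2]
  refine (abs_add_three _ _ _).trans ?_
  rw [abs_mul, abs_of_pos hn0, abs_div, abs_two]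
  gcongr

lemma abs_neg_log_binomProb_sub_gaussApprox_le_of_far {m i : ℕ} (hi : i ≤ m)
    (hfar : (m : ℝ) / 4 < |(i : ℝ) - m / 2|) :
    |-log (binomProb m i) - gaussApprox m i| ≤ 384 * ((i : ℝ) - m / 2) ^ 4 / m ^ 3 := by
  have hm0 : (0 : ℝ) < m := by
    rcases Nat.eq_zero_or_pos m with rfl | hm
    · rw [Nat.le_zero.1 hi] at hfar; norm_num at hfar
    · exact Nat.cast_pos.2 hm
  have him : (i : ℝ) ≤ m := by exact_mod_cast hi
  have hC1 : (1 : ℝ) ≤ m.choose i := by exact_mod_cast Nat.choose_pos hi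
  have hC2 : (m.choose i : ℝ) ≤ 2 ^ m := by exact_mod_cast Nat.choose_le_two_pow m i
  have hlogC : log (binomProb m i) = log (m.choose i) - m * log 2 := by
    rw [binomProb, log_div (by positivity) (by positivity), log_pow]
  have hsurp0 : 0 ≤ -log (binomProb m i) := by
    rw [neg_nonneg]
    exact log_nonpos (binomProb_pos hi).le ((div_le_one (by positivity)).2 hC2)
  have hsurp1 : -log (binomProb m i) ≤ 3 * m / 2 := by
    rw [hlogC]
    nlinarith [log_nonneg hC1, log_two_lt_d9]
  have hm1 : (1 : ℝ) ≤ m := by exact_mod_cast Nat.one_le_iff_ne_zero.2 (Nat.cast_pos.1 hm0).ne'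
  have hlogπ0 : 0 ≤ log (π * m / 2) := log_nonneg (by nlinarith [pi_gt_three])
  have hlogπ1 : log (π * m / 2) ≤ 2 * m := by
    nlinarith [log_le_sub_one_of_pos (by positivity : 0 < π * m / 2), pi_lt_four]
  have hquad : 2 * ((i : ℝ) - m / 2) ^ 2 / m ≤ m / 2 := by
    rw [div_le_iff₀ hm0]; nlinarith
  have hg0 : 0 ≤ gaussApprox m i := by unfold gaussApprox; positivity
  have hg1 : gaussApprox m i ≤ 3 * m / 2 := by unfold gaussApprox; linarith
  have ht : (m : ℝ) ^ 4 / 256 ≤ ((i : ℝ) - m / 2) ^ 4 := by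
    have := pow_le_pow_left₀ (by positivity) hfar.le 4
    rw [pow_abs] at this
    calc (m : ℝ) ^ 4 / 256 = ((m : ℝ) / 4) ^ 4 := by ring
      _ ≤ |((i : ℝ) - m / 2) ^ 4| := this
      _ = _ := abs_of_nonneg (by positivity)
  calc |-log (binomProb m i) - gaussApprox m i| ≤ 3 * m / 2 :=
        abs_sub_le_of_nonneg_of_le hsurp0 hsurp1 hg0 hg1
    _ ≤ 384 * ((i : ℝ) - m / 2) ^ 4 / m ^ 3 := by
        rw [le_div_iff₀ (by positivity)]; nlinarith

lemma abs_neg_log_binomProb_sub_gaussApprox_le {M m i : ℕ} {δ : ℝ}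
    (hδ : ∀ k ≥ M, |stirlingErr k| ≤ δ) (hM : 0 < M) (hm : 4 * M ≤ m) (hi : i ≤ m) :
    |-log (binomProb m i) - gaussApprox m i|
      ≤ 384 * ((i : ℝ) - m / 2) ^ 4 / m ^ 3 + 4 * ((i : ℝ) - m / 2) ^ 2 / m ^ 2 + 3 * δ := by
  have hδ0 : 0 ≤ δ := (abs_nonneg _).trans (hδ M le_rfl)
  rcases le_or_gt |(i : ℝ) - m / 2| (m / 4) with hnear | hfar
  · obtain ⟨h1, h2⟩ := abs_le.1 hnear
    have hi4 : m ≤ 4 * i := by exact_mod_cast (by linarith : (m : ℝ) ≤ 4 * i)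
    have hj4 : m ≤ 4 * (m - i) := by
      have : (m : ℝ) ≤ 4 * (m - i : ℕ) := by push_cast [hi]; linarith
      exact_mod_cast this
    refine (abs_neg_log_binomProb_sub_gaussApprox_le_of_near hδ hM (by omega) (by omega)
      (Nat.add_sub_cancel' hi) hnear).trans ?_
    gcongr
    norm_num
  · refine (abs_neg_log_binomProb_sub_gaussApprox_le_of_far hi hfar).trans ?_
    have : 0 ≤ 4 * ((i : ℝ) - m / 2) ^ 2 / m ^ 2 := by positivity
    linarith

lemma abs_binEnt_sub_half_log_le {M m : ℕ} {δ : ℝ} (hδ : ∀ k ≥ M, |stirlingErr k| ≤ δ) (hM : 0 < M)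
    (hm : 4 * M ≤ m) : |binEnt m - log (π * m / 2) / 2 - 1 / 2| ≤ 73 / m + 3 * δ := by
  have hm0 : (0 : ℝ) < m := Nat.cast_pos.2 (by omega)
  have hmean :
      ∑ i ∈ range (m + 1), binomProb m i * gaussApprox m i = log (π * m / 2) / 2 + 1 / 2 := by
    simp only [gaussApprox, mul_add, sum_add_distrib, ← sum_mul, sum_binomProb, mul_div_assoc',
      mul_left_comm _ (2 : ℝ), ← mul_sum, ← sum_div, sum_binomProb_mul_sq]
    field_simp
    ring
  rw [binEnt_eq_sum, sub_sub, ← hmean, ← sum_sub_distrib]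
  calc |∑ i ∈ range (m + 1),
          (binomProb m i * -log (binomProb m i) - binomProb m i * gaussApprox m i)|
      ≤ ∑ i ∈ range (m + 1), binomProb m i * (384 * ((i : ℝ) - m / 2) ^ 4 / m ^ 3
          + 4 * ((i : ℝ) - m / 2) ^ 2 / m ^ 2 + 3 * δ) := by
        refine (abs_sum_le_sum_abs _ _).trans (sum_le_sum fun i hi ↦ ?_)
        have him := Nat.lt_succ_iff.1 (mem_range.1 hi)
        have hp := binomProb_pos him
        rw [← mul_sub, abs_mul, abs_of_pos hp]
        exact mul_le_mul_of_nonneg_left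
          (abs_neg_log_binomProb_sub_gaussApprox_le hδ hM hm him) hp.le
    _ = 384 / m ^ 3 * ∑ i ∈ range (m + 1), binomProb m i * ((i : ℝ) - m / 2) ^ 4
          + 4 / m ^ 2 * ∑ i ∈ range (m + 1), binomProb m i * ((i : ℝ) - m / 2) ^ 2
          + 3 * δ * ∑ i ∈ range (m + 1), binomProb m i := by
        rw [mul_sum, mul_sum, mul_sum, ← sum_add_distrib, ← sum_add_distrib]
        exact sum_congr rfl fun i _ ↦ by ring
    _ = 384 / m ^ 3 * ((3 * (m : ℝ) ^ 2 - 2 * m) / 16) + 4 / m ^ 2 * (m / 4) + 3 * δ := by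
        rw [sum_binomProb_mul_pow_four, sum_binomProb_mul_sq, sum_binomProb, mul_one]
    _ ≤ 73 / m + 3 * δ := by
        rw [add_le_add_iff_right]
        field_simp
        nlinarith

lemma tendsto_binEnt_sub_half_log :
    Tendsto (fun m : ℕ ↦ binEnt m - log m / 2) atTop (𝓝 (log (π / 2) / 2 + 1 / 2)) := by
  rw [Metric.tendsto_atTop]
  intro ε hε
  obtain ⟨M, hM⟩ := eventually_atTop.1
    (tendsto_stirlingErr.eventually (Metric.closedBall_mem_nhds 0 (by positivity : 0 < ε / 8)))
  have hδ : ∀ k ≥ M + 1, |stirlingErr k| ≤ ε / 8 := fun k hk ↦ by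
    simpa [Real.dist_eq] using hM k (by omega)
  refine ⟨4 * (M + 1) + ⌈146 / ε⌉₊, fun m hm ↦ ?_⟩
  have hm0 : (0 : ℝ) < m := Nat.cast_pos.2 (by omega)
  have hmε : 146 / ε ≤ m := (Nat.le_ceil _).trans (by exact_mod_cast (by omega : ⌈146 / ε⌉₊ ≤ m))
  have hsplit : log (π * m / 2) = log (π / 2) + log m := by
    rw [mul_div_right_comm, log_mul (by positivity) hm0.ne']
  have hbound := abs_binEnt_sub_half_log_le hδ M.succ_pos (by omega : 4 * (M + 1) ≤ m)
  rw [hsplit] at hbound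
  rw [Real.dist_eq]
  calc |binEnt m - log m / 2 - (log (π / 2) / 2 + 1 / 2)|
      = |binEnt m - (log (π / 2) + log m) / 2 - 1 / 2| := by ring_nf
    _ ≤ 73 / m + 3 * (ε / 8) := hbound
    _ < ε := by
        have : 73 / (m : ℝ) ≤ ε / 2 := by
          rw [div_le_iff₀ hm0]; rw [div_le_iff₀ hε] at hmε; linarith
        linarith

lemma exists_log_two_sub_le_two_mul_sub {h : ℕ → ℝ} {c : ℝ}
    (hh : Tendsto (fun k ↦ h k - log k / 2) atTop (𝓝 c)) {ε : ℝ} (hε : 0 < ε) :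
    ∃ m₀ : ℕ, 0 < m₀ ∧ ∀ a b : ℕ, 0 < a → 0 < b → m₀ ≤ a + b →
      log 2 - ε ≤ 2 * h (a + b) - h a - h b := by
  obtain ⟨T, hT⟩ := eventually_atTop.1
    (hh.eventually (Metric.closedBall_mem_nhds c (by positivity : 0 < ε / 4)))
  have hclose : ∀ k ≥ T, |h k - log k / 2 - c| ≤ ε / 4 := fun k hk ↦ by
    rw [← Real.dist_eq]; exact hT k hk
  obtain ⟨B, hB⟩ := ((range T).image h).bddAbove
  have hsmall : ∀ k < T, h k ≤ B := fun k hk ↦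
    hB (Finset.mem_coe.2 (mem_image_of_mem h (mem_range.2 hk)))
  set m₀ := 2 * T + 1 + ⌈exp (2 * (log 2 + B - c))⌉₊
  have key : ∀ a b : ℕ, 0 < a → 0 < b → m₀ ≤ a + b → T ≤ b →
      log 2 - ε ≤ 2 * h (a + b) - h a - h b := by
    intro a b ha hb hab hTb
    have ha' : (0 : ℝ) < a := Nat.cast_pos.2 ha
    have hb' : (0 : ℝ) < b := Nat.cast_pos.2 hb
    have hab_close := abs_le.1 (hclose (a + b) (by omega))
    have hb_close := abs_le.1 (hclose b hTb)
    push_cast at hab_close ⊢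
    by_cases hTa : T ≤ a
    · have ha_close := abs_le.1 (hclose a hTa)
      have hamgm : log a + log b ≤ 2 * log (a + b) - 2 * log 2 := by
        have h := log_le_log (mul_pos ha' hb')
          (by nlinarith [sq_nonneg ((a : ℝ) - b)] : (a : ℝ) * b ≤ (((a : ℝ) + b) / 2) ^ 2)
        rw [log_mul ha'.ne' hb'.ne', log_pow, log_div (by positivity) two_ne_zero] at h
        push_cast at h
        linarith
      linarith
    · have hlogn : 2 * (log 2 + B - c) ≤ log (a + b) := by
        rw [le_log_iff_exp_le (by positivity)]
        refine (Nat.le_ceil _).trans ?_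
        exact_mod_cast (by omega : ⌈exp (2 * (log 2 + B - c))⌉₊ ≤ a + b)
      have hlogb : log b ≤ log (a + b) := log_le_log hb' (by linarith)
      linarith [hsmall a (by omega)]
  refine ⟨m₀, by omega, fun a b ha hb hab ↦ ?_⟩
  by_cases hTb : T ≤ b
  · exact key a b ha hb hab hTb
  · have := key b a hb ha (by omega) (by omega)
    rw [add_comm b a] at this
    linarith

/-- For every `ε > 0` there is `m₀` such that for all `m ≥ m₀` and all
`Δ ∈ {1, …, m−1}`, we have `2·h_m − h_Δ − h_{m−Δ} ≥ ln 2 − ε`. -/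
theorem stmt_3 :
    ∀ ε : ℝ, 0 < ε → ∃ m₀ : ℕ, 0 < m₀ ∧
      ∀ m : ℕ, m₀ ≤ m → ∀ Δ : ℕ, 1 ≤ Δ → Δ ≤ m - 1 →
        2 * binEnt m - binEnt Δ - binEnt (m - Δ) ≥ Real.log 2 - ε := by
  intro ε hε
  obtain ⟨m₀, hm₀, h⟩ := exists_log_two_sub_le_two_mul_sub tendsto_binEnt_sub_half_log hε
  refine ⟨m₀, hm₀, fun m hm Δ hΔ hΔm ↦ ?_⟩
  have key := h Δ (m - Δ) hΔ (by omega) (by omega)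
  rwa [Nat.add_sub_cancel' (by omega)] at key
end

section
/- For every integer m ≥ 2 and every Δ ∈ {1, …, m−1}, h_Δ + h_{m−Δ} ≤ h_{⌈m/2⌉} + h_{⌊m/2⌋}; that is, the quantity 2·h_m − h_Δ − h_{m−Δ} over Δ ∈ {1, …, m−1} is minimized when Δ = ⌊m/2⌋ (equivalently ⌈m/2⌉). -/
open Finset Real

/-- `E[f X]` for `X ~ Binomial(m, 1/2)`. -/
noncomputable def binomMean (m : ℕ) (f : ℕ → ℝ) : ℝ :=
  (∑ i ∈ range (m + 1), (m.choose i : ℝ) * f i) / 2 ^ m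

section binomMean

variable {m : ℕ} {f g : ℕ → ℝ}

theorem binomMean_congr (h : ∀ i ≤ m, f i = g i) : binomMean m f = binomMean m g := by
  unfold binomMean
  congr 1
  exact sum_congr rfl fun i hi => by rw [h i (Nat.lt_succ_iff.mp (mem_range.mp hi))]

theorem binomMean_add : binomMean m (fun i => f i + g i) = binomMean m f + binomMean m g := by
  simp only [binomMean, mul_add, sum_add_distrib, add_div]

theorem binomMean_sub : binomMean m (fun i => f i - g i) = binomMean m f - binomMean m g := by
  simp only [binomMean, mul_sub, sum_sub_distrib, sub_div]

theorem binomMean_mono (h : ∀ i, f i ≤ g i) : binomMean m f ≤ binomMean m g := by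
  unfold binomMean
  gcongr with i
  exact h i

end binomMean

theorem binomMean_const (m : ℕ) (c : ℝ) : binomMean m (fun _ => c) = c := by
  have hsum : ∑ i ∈ range (m + 1), (m.choose i : ℝ) = 2 ^ m := by
    exact_mod_cast Nat.sum_range_choose m
  rw [binomMean, ← sum_mul, hsum, mul_div_cancel_left₀ _ (by positivity)]

theorem binomMean_reflect (m : ℕ) (f : ℕ → ℝ) :
    binomMean m (fun i => f (m - i)) = binomMean m f := by
  unfold binomMean
  congr 1
  rw [← sum_range_reflect]
  refine sum_congr rfl fun i hi => ?_
  have hi : i ≤ m := Nat.lt_succ_iff.mp (mem_range.mp hi)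
  rw [Nat.add_sub_cancel, Nat.choose_symm hi]
  dsimp only
  rw [Nat.sub_sub_self hi]

theorem binomMean_succ (m : ℕ) (f : ℕ → ℝ) :
    binomMean (m + 1) f = (binomMean m f + binomMean m (fun i => f (i + 1))) / 2 := by
  have pascal : ∑ i ∈ range (m + 2), ((m + 1).choose i : ℝ) * f i
      = ∑ i ∈ range (m + 1), (m.choose i : ℝ) * f i
        + ∑ i ∈ range (m + 1), (m.choose i : ℝ) * f (i + 1) := by
    have shift : ∑ i ∈ range (m + 1), (m.choose (i + 1) : ℝ) * f (i + 1) + f 0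
        = ∑ i ∈ range (m + 1), (m.choose i : ℝ) * f i := by
      have h := sum_range_succ' (fun i => (m.choose i : ℝ) * f i) (m + 1)
      rw [sum_range_succ, Nat.choose_succ_self] at h
      simpa using h.symm
    rw [sum_range_succ']
    simp only [Nat.choose_succ_succ, Nat.cast_add, add_mul, sum_add_distrib,
      Nat.choose_zero_right, Nat.cast_one, one_mul]
    linarith
  rw [binomMean, binomMean, binomMean, pascal, pow_succ]
  field_simp

noncomputable def logChooseMean (m : ℕ) : ℝ :=
  binomMean m (fun i => log (m.choose i))

theorem binEnt_eq_mul_log_two_sub (m : ℕ) :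
    binEnt m = m * log 2 - logChooseMean m := by
  have hterm : ∀ i ∈ range (m + 1), (m.choose i : ℝ) / 2 ^ m * log ((m.choose i : ℝ) / 2 ^ m)
      = (m.choose i : ℝ) * (log (m.choose i) - m * log 2) / 2 ^ m := by
    intro i hi
    have hpos : (0 : ℝ) < m.choose i := by
      exact_mod_cast Nat.choose_pos (Nat.lt_succ_iff.mp (mem_range.mp hi))
    rw [log_div hpos.ne' (by positivity), log_pow]
    ring
  calc binEnt m = -binomMean m (fun i => log (m.choose i) - m * log 2) := by
        rw [binEnt, sum_congr rfl hterm, ← sum_div, binomMean]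
    _ = m * log 2 - logChooseMean m := by
        rw [binomMean_sub, binomMean_const, logChooseMean]
        ring

theorem log_choose_succ_succ {m i : ℕ} (h : i ≤ m) :
    log ((m + 1).choose (i + 1) : ℝ) = log (m + 1) + log (m.choose i) - log (i + 1) := by
  have hmul : ((m + 1).choose (i + 1) : ℝ) * (i + 1) = (m + 1) * m.choose i := by
    exact_mod_cast (Nat.add_one_mul_choose_eq m i).symm
  have hpos : (0 : ℝ) < m.choose i := by exact_mod_cast Nat.choose_pos h
  have hpos' : (0 : ℝ) < (m + 1).choose (i + 1) := by exact_mod_cast Nat.choose_pos (by omega)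
  have hlog := congrArg log hmul
  rw [log_mul hpos'.ne' (by positivity), log_mul (by positivity) hpos.ne'] at hlog
  linarith

theorem log_choose_succ {m i : ℕ} (h : i ≤ m) :
    log ((m + 1).choose i : ℝ) = log (m + 1) + log (m.choose i) - log ((m - i : ℕ) + 1) := by
  have hmul : ((m + 1).choose i : ℝ) * ((m - i : ℕ) + 1) = (m + 1) * m.choose i := by
    have h := Nat.choose_mul_succ_eq m i
    rw [show m + 1 - i = m - i + 1 by omega] at h
    exact_mod_cast h.symm.trans (mul_comm _ _)
  have hpos : (0 : ℝ) < m.choose i := by exact_mod_cast Nat.choose_pos h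
  have hpos' : (0 : ℝ) < (m + 1).choose i := by exact_mod_cast Nat.choose_pos (by omega)
  have hlog := congrArg log hmul
  rw [log_mul hpos'.ne' (by positivity), log_mul (by positivity) hpos.ne'] at hlog
  linarith

theorem logChooseMean_succ (m : ℕ) :
    logChooseMean (m + 1)
      = logChooseMean m + (log (m + 1) - binomMean m (fun i => log (i + 1))) := by
  have hlo : binomMean m (fun i => log ((m + 1).choose i))
      = binomMean m (fun i => log (m + 1) + log (m.choose i) - log ((m - i : ℕ) + 1)) :=
    binomMean_congr fun i hi => log_choose_succ hi
  have hhi : binomMean m (fun i => log ((m + 1).choose (i + 1)))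
      = binomMean m (fun i => log (m + 1) + log (m.choose i) - log (i + 1)) :=
    binomMean_congr fun i hi => log_choose_succ_succ hi
  have hrefl := binomMean_reflect m (fun j => log ((j : ℝ) + 1))
  beta_reduce at hrefl
  rw [logChooseMean, binomMean_succ, hlo, hhi, binomMean_sub, binomMean_sub, binomMean_add,
    binomMean_const, hrefl, logChooseMean]
  ring

theorem log_le_sub_inv_div_two {t : ℝ} (ht : 1 ≤ t) : log t ≤ (t - t⁻¹) / 2 := by
  rw [← sinh_log (by linarith)]
  exact self_le_sinh_iff.mpr (log_nonneg ht)

theorem log_add_one_sub_log_le {x : ℝ} (hx : 0 < x) :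
    log (x + 1) - log x ≤ (x⁻¹ + (x + 1)⁻¹) / 2 := by
  have h := log_le_sub_inv_div_two (t := (x + 1) / x) (by rw [le_div_iff₀ hx]; linarith)
  rw [log_div (by positivity) hx.ne'] at h
  convert h using 1
  field_simp
  ring

theorem inv_add_one_le_log_add_one_sub_log {x : ℝ} (hx : 0 < x) :
    (x + 1)⁻¹ ≤ log (x + 1) - log x := by
  have h := one_sub_inv_le_log_of_pos (x := (x + 1) / x) (by positivity)
  rw [log_div (by positivity) hx.ne'] at h
  convert h using 1
  field_simp
  ring

theorem choose_div_add_one (n i : ℕ) :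
    (n.choose i : ℝ) / (i + 1) = ((n + 1).choose (i + 1) : ℝ) / (n + 1) := by
  have h : ((n : ℝ) + 1) * n.choose i = (n + 1).choose (i + 1) * (i + 1) := by
    exact_mod_cast Nat.add_one_mul_choose_eq n i
  field_simp
  linarith

theorem sum_choose_div_add_one (m : ℕ) :
    ∑ i ∈ range (m + 1), (m.choose i : ℝ) / (i + 1) = (2 ^ (m + 1) - 1) / (m + 1) := by
  have hsum : ∑ i ∈ range (m + 2), ((m + 1).choose i : ℝ) = 2 ^ (m + 1) := by
    exact_mod_cast Nat.sum_range_choose (m + 1)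
  rw [sum_range_succ'] at hsum
  rw [sum_congr rfl fun i _ => choose_div_add_one m i, ← sum_div]
  congr 1
  simp only [Nat.choose_zero_right, Nat.cast_one] at hsum
  linarith

theorem sum_choose_div_add_one_mul_add_two (m : ℕ) :
    ∑ i ∈ range (m + 1), (m.choose i : ℝ) / ((i + 1) * (i + 2))
      = (2 ^ (m + 2) - m - 3) / ((m + 1) * (m + 2)) := by
  have hterm : ∀ i ∈ range (m + 1), (m.choose i : ℝ) / ((i + 1) * (i + 2))
      = ((m + 1).choose (i + 1) : ℝ) / ((i + 1 : ℕ) + 1) / (m + 1) := by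
    intro i _
    rw [← div_div, choose_div_add_one]
    push_cast
    ring
  have hsum := sum_choose_div_add_one (m + 1)
  rw [sum_range_succ'] at hsum
  rw [sum_congr rfl hterm, ← sum_div]
  simp only [Nat.choose_zero_right, Nat.cast_one, Nat.cast_zero, zero_add, div_one] at hsum
  rw [eq_sub_of_add_eq hsum]
  push_cast
  field_simp
  ring

theorem binomMean_inv_add_one_add_inv_add_two (m : ℕ) :
    binomMean m (fun i => (((i : ℝ) + 1)⁻¹ + ((i : ℝ) + 2)⁻¹) / 2)
      = (2 ^ (m + 2) - 1) / (2 ^ (m + 1) * (m + 2)) := by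
  have hterm : ∀ i ∈ range (m + 1), (m.choose i : ℝ) * ((((i : ℝ) + 1)⁻¹ + ((i : ℝ) + 2)⁻¹) / 2)
      = (m.choose i : ℝ) / (i + 1) - (m.choose i : ℝ) / ((i + 1) * (i + 2)) / 2 := by
    intro i _
    field_simp
    ring
  rw [binomMean, sum_congr rfl hterm, sum_sub_distrib, ← sum_div, sum_choose_div_add_one,
    sum_choose_div_add_one_mul_add_two]
  field_simp
  ring

theorem binomMean_log_add_two_sub_log_add_one_le (m : ℕ) :
    binomMean m (fun i => log ((i : ℝ) + 2) - log ((i : ℝ) + 1))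
      ≤ 2 * (log ((m : ℝ) + 2) - log ((m : ℝ) + 1)) := by
  have hsecant : (m + 2 : ℝ)⁻¹ ≤ log ((m : ℝ) + 2) - log ((m : ℝ) + 1) := by
    have h := inv_add_one_le_log_add_one_sub_log (x := (m : ℝ) + 1) (by positivity)
    rwa [add_assoc, one_add_one_eq_two] at h
  calc binomMean m (fun i => log ((i : ℝ) + 2) - log ((i : ℝ) + 1))
      ≤ binomMean m (fun i => (((i : ℝ) + 1)⁻¹ + ((i : ℝ) + 2)⁻¹) / 2) := by
        refine binomMean_mono fun i => ?_
        have h := log_add_one_sub_log_le (x := (i : ℝ) + 1) (by positivity)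
        rwa [add_assoc, one_add_one_eq_two] at h
    _ = (2 ^ (m + 2) - 1) / (2 ^ (m + 1) * (m + 2)) := binomMean_inv_add_one_add_inv_add_two m
    _ ≤ 2 * (m + 2 : ℝ)⁻¹ := by
        rw [div_le_iff₀ (by positivity), pow_succ _ (m + 1)]
        field_simp
        linarith
    _ ≤ 2 * (log ((m : ℝ) + 2) - log ((m : ℝ) + 1)) := by linarith

theorem monotone_log_add_one_sub_binomMean :
    Monotone fun m : ℕ => log ((m : ℝ) + 1) - binomMean m (fun i => log ((i : ℝ) + 1)) := by
  refine monotone_nat_of_le_succ fun m => ?_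
  have hshift : binomMean (m + 1) (fun i => log ((i : ℝ) + 1))
        - binomMean m (fun i => log ((i : ℝ) + 1))
      = binomMean m (fun i => log ((i : ℝ) + 2) - log ((i : ℝ) + 1)) / 2 := by
    rw [binomMean_succ]
    simp only [Nat.cast_add, Nat.cast_one, add_assoc, one_add_one_eq_two]
    rw [binomMean_sub]
    ring
  have hbound := binomMean_log_add_two_sub_log_add_one_le m
  push_cast
  rw [add_assoc, one_add_one_eq_two]
  linarith

theorem apply_add_one_div_two_add_apply_div_two_le {f : ℕ → ℝ}
    (hf : Monotone fun n => f (n + 1) - f n) (a b : ℕ) :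
    f ((a + b + 1) / 2) + f ((a + b) / 2) ≤ f a + f b := by
  suffices key : ∀ d a, f (a + (d + 1) / 2) + f (a + d / 2) ≤ f a + f (a + d) by
    wlog hab : a ≤ b generalizing a b
    · have h := this b a (by omega)
      rwa [add_comm b a, add_comm (f b)] at h
    obtain ⟨d, rfl⟩ := Nat.exists_eq_add_of_le hab
    have h := key d a
    rwa [show a + (d + 1) / 2 = (a + (a + d) + 1) / 2 by omega,
      show a + d / 2 = (a + (a + d)) / 2 by omega] at h
  intro d
  induction d using Nat.twoStepInduction with
  | zero => simp
  | one => intro a; simp [add_comm]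
  | more d ih _ =>
    intro a
    have hinc : f (a + 1) - f a ≤ f (a + d + 1 + 1) - f (a + d + 1) :=
      hf (by omega : a ≤ a + d + 1)
    have h := ih (a + 1)
    rw [show a + 1 + (d + 1) / 2 = a + (d + 2 + 1) / 2 by omega,
      show a + 1 + d / 2 = a + (d + 2) / 2 by omega, show a + 1 + d = a + d + 1 by omega] at h
    rw [show a + (d + 2) = a + d + 1 + 1 by omega]
    linarith

/-- For every `m ≥ 2` and every `Δ ∈ {1, …, m−1}`,
`h_Δ + h_{m−Δ} ≤ h_{⌈m/2⌉} + h_{⌊m/2⌋}`; i.e. `2·h_m − h_Δ − h_{m−Δ}` is minimized over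
`Δ ∈ {1, …, m−1}` at `Δ = ⌊m/2⌋` (equivalently `⌈m/2⌉`). -/
theorem stmt_4 :
    ∀ m : ℕ, 2 ≤ m → ∀ Δ : ℕ, 1 ≤ Δ → Δ ≤ m - 1 →
      binEnt Δ + binEnt (m - Δ) ≤ binEnt ((m + 1) / 2) + binEnt (m / 2) := by
  intro m _ Δ _ hΔ
  have hconvex : Monotone fun n => logChooseMean (n + 1) - logChooseMean n := by
    simpa only [logChooseMean_succ, add_sub_cancel_left, Nat.cast_add, Nat.cast_one]
      using monotone_log_add_one_sub_binomMean
  have hmin := apply_add_one_div_two_add_apply_div_two_le hconvex Δ (m - Δ)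
  rw [Nat.add_sub_cancel' (by omega)] at hmin
  have hsize : (((m + 1) / 2 : ℕ) : ℝ) + ((m / 2 : ℕ) : ℝ) = Δ + ((m - Δ : ℕ) : ℝ) := by
    exact_mod_cast (by omega : (m + 1) / 2 + m / 2 = Δ + (m - Δ))
  simp only [binEnt_eq_mul_log_two_sub]
  linear_combination hmin - log 2 * hsize
end

section
/- Let A = (A_1, …, A_n) be uniform on {0,1}^n, let m ≥ 1, and let p₁ < p₂ < … < p_r ≤ n be positions satisfying p₁ ≥ m and p_j − p_{j−1} ≥ m for all 2 ≤ j ≤ r. Then the joint Shannon entropy of the rank answers (R(p₁), …, R(p_r)) is at least r·h_m. -/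
/-!
The positions cut `[0, p_r)` into disjoint blocks of lengths `g_j = p_j - p_{j-1} ≥ m`. The numbers
of ones `D_j` in these blocks are independent `Binomial(g_j, 1/2)` variables under the uniform
distribution, so `H(D) = ∑ h_{g_j}`. Since `D` is a function of the rank vector (its increments),
`H(R) ≥ H(D)`, and `h_k` is nondecreasing in `k` because Pascal's rule makes each `Binomial(k+1)`
weight the average of two `Binomial(k)` weights and `x ↦ -x log x` is concave.
-/

/-- The Shannon entropy (in nats) of the random variable `X` defined on the finite
probability space `Ω` with probability mass function `μ`:
`H(X) = -∑_y Pr[X = y] · ln Pr[X = y]`. -/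
noncomputable def finEntropy {Ω α : Type*} [Fintype Ω] [DecidableEq α]
    (μ : Ω → ℝ) (X : Ω → α) : ℝ :=
  -∑ y ∈ Finset.univ.image X,
      (∑ ω ∈ Finset.univ.filter (fun ω => X ω = y), μ ω) *
        Real.log (∑ ω ∈ Finset.univ.filter (fun ω => X ω = y), μ ω)

/-- The rank (prefix-sum) answer `R(j) = ∑_{i=1}^j A_i` for a bit-array `A`. -/
def rank {n : ℕ} (A : Fin n → Bool) (j : ℕ) : ℕ :=
  (Finset.univ.filter (fun i : Fin n => (i : ℕ) < j ∧ A i = true)).card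

open Finset Real Function

theorem negMulLog_add_le {a b : ℝ} (ha : 0 ≤ a) (hb : 0 ≤ b) :
    negMulLog (a + b) ≤ negMulLog a + negMulLog b := by
  have key : ∀ {x z : ℝ}, 0 ≤ x → x ≤ z → x * log x ≤ x * log z := fun {x z} hx hxz => by
    rcases hx.eq_or_lt with rfl | hx
    · simp
    · exact mul_le_mul_of_nonneg_left (log_le_log hx hxz) hx.le
  simp only [negMulLog, neg_mul, add_mul, neg_add]
  linarith [key ha (le_add_of_nonneg_right hb), key hb (le_add_of_nonneg_left ha)]

theorem negMulLog_sum_le {ι : Type*} (s : Finset ι) {a : ι → ℝ} (ha : ∀ i ∈ s, 0 ≤ a i) :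
    negMulLog (∑ i ∈ s, a i) ≤ ∑ i ∈ s, negMulLog (a i) := by
  classical
  induction s using Finset.induction_on with
  | empty => simp
  | insert j s hj ih =>
    rw [sum_insert hj, sum_insert hj]
    have hs := fun i hi => ha i (mem_insert_of_mem hi)
    calc negMulLog (a j + ∑ i ∈ s, a i)
        ≤ negMulLog (a j) + negMulLog (∑ i ∈ s, a i) :=
          negMulLog_add_le (ha j (mem_insert_self j s)) (sum_nonneg hs)
      _ ≤ _ := by gcongr; exact ih hs

theorem negMulLog_prod {ι : Type*} [DecidableEq ι] (s : Finset ι) (x : ι → ℝ) :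
    negMulLog (∏ i ∈ s, x i) = ∑ i ∈ s, (∏ k ∈ s.erase i, x k) * negMulLog (x i) := by
  induction s using Finset.induction_on with
  | empty => simp
  | insert a s ha ih =>
    rw [prod_insert ha, negMulLog_mul, ih, sum_insert ha, erase_insert ha, mul_sum]
    congr 1
    refine sum_congr rfl fun i hi => ?_
    have hia : i ≠ a := ne_of_mem_of_not_mem hi ha
    rw [erase_insert_of_ne hia.symm, prod_insert fun h => ha (mem_of_mem_erase h)]
    ring

theorem sum_piFinset_negMulLog_prod {ι β : Type*} [Fintype ι] [DecidableEq ι]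
    (t : ι → Finset β) (q : ι → β → ℝ) (hq : ∀ j, ∑ b ∈ t j, q j b = 1) :
    ∑ d ∈ Fintype.piFinset t, negMulLog (∏ j, q j (d j)) = ∑ j, ∑ b ∈ t j, negMulLog (q j b) := by
  let g (j k : ι) (b : β) : ℝ := if k = j then negMulLog (q k b) else q k b
  have hprod : ∀ d : ι → β, negMulLog (∏ j, q j (d j)) = ∑ j, ∏ k, g j k (d k) := fun d => by
    rw [negMulLog_prod]
    refine sum_congr rfl fun j _ => ?_
    rw [← mul_prod_erase univ _ (mem_univ j), mul_comm]
    simp only [g, if_pos rfl]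
    congr 1
    exact prod_congr rfl fun k hk => (if_neg (ne_of_mem_erase hk)).symm
  calc ∑ d ∈ Fintype.piFinset t, negMulLog (∏ j, q j (d j))
      = ∑ j, ∏ k, ∑ b ∈ t k, g j k b := by
        simp only [hprod, prod_univ_sum]
        exact sum_comm
    _ = ∑ j, ∑ b ∈ t j, negMulLog (q j b) := sum_congr rfl fun j _ => by
        rw [prod_eq_single j (fun k _ hk => by simp only [g, if_neg hk, hq]) (by simp)]
        simp [g]

theorem negMulLog_midpoint_ge {a b : ℝ} (ha : 0 ≤ a) (hb : 0 ≤ b) :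
    (negMulLog a + negMulLog b) / 2 ≤ negMulLog ((a + b) / 2) := by
  have h := concaveOn_negMulLog.2 (Set.mem_Ici.2 ha) (Set.mem_Ici.2 hb)
    (by norm_num : (0 : ℝ) ≤ 1 / 2) (by norm_num : (0 : ℝ) ≤ 1 / 2) (by norm_num)
  simp only [smul_eq_mul] at h
  calc (negMulLog a + negMulLog b) / 2 = 1 / 2 * negMulLog a + 1 / 2 * negMulLog b := by ring
    _ ≤ negMulLog (1 / 2 * a + 1 / 2 * b) := h
    _ = negMulLog ((a + b) / 2) := by ring_nf

theorem binEnt_eq_sum_negMulLog (m : ℕ) :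
    binEnt m = ∑ i ∈ range (m + 1), negMulLog ((m.choose i : ℝ) / 2 ^ m) := by
  simp [binEnt, negMulLog]

theorem choose_succ_succ_div_two_pow (k i : ℕ) :
    ((k + 1).choose (i + 1) : ℝ) / 2 ^ (k + 1)
      = ((k.choose i : ℝ) / 2 ^ k + (k.choose (i + 1) : ℝ) / 2 ^ k) / 2 := by
  rw [Nat.choose_succ_succ']
  push_cast
  ring

theorem binEnt_le_binEnt_succ (k : ℕ) : binEnt k ≤ binEnt (k + 1) := by
  set b : ℕ → ℝ := fun i => (k.choose i : ℝ) / 2 ^ k with hb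
  have hb0 : ∀ i, 0 ≤ b i := fun i => by positivity
  -- Pascal's rule makes each weight of `Binomial(k+1)` the average of two neighbouring
  -- weights of `Binomial(k)`, so concavity of `negMulLog` gives the claim.
  have hshift : ∑ i ∈ range (k + 1), negMulLog (b (i + 1)) + negMulLog (b 0) = binEnt k := by
    rw [binEnt_eq_sum_negMulLog, ← sum_range_succ' (fun i => negMulLog (b i)), sum_range_succ]
    simp [hb, Nat.choose_succ_self]
  have hmid : ∑ i ∈ range (k + 1), (negMulLog (b i) + negMulLog (b (i + 1))) / 2
      ≤ ∑ i ∈ range (k + 1), negMulLog (((k + 1).choose (i + 1) : ℝ) / 2 ^ (k + 1)) :=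
    sum_le_sum fun i _ => by
      rw [choose_succ_succ_div_two_pow]
      exact negMulLog_midpoint_ge (hb0 i) (hb0 (i + 1))
  have hzero : negMulLog (b 0) / 2 ≤ negMulLog (((k + 1).choose 0 : ℝ) / 2 ^ (k + 1)) := by
    have h := negMulLog_midpoint_ge le_rfl (hb0 0)
    rw [negMulLog_zero, zero_add, zero_add] at h
    convert h using 2
    simp only [hb, Nat.choose_zero_right, Nat.cast_one, pow_succ, div_div]
  have havg : ∑ i ∈ range (k + 1), (negMulLog (b i) + negMulLog (b (i + 1))) / 2
      = binEnt k - negMulLog (b 0) / 2 := by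
    rw [← sum_div, sum_add_distrib, ← binEnt_eq_sum_negMulLog]
    linarith
  rw [binEnt_eq_sum_negMulLog (k + 1), sum_range_succ']
  linarith

theorem binEnt_monotone : Monotone binEnt := monotone_nat_of_le_succ binEnt_le_binEnt_succ

namespace finEntropy

variable {Ω α : Type*} [Fintype Ω] [DecidableEq α]

theorem eq_sum_negMulLog_of_subset (μ : Ω → ℝ) (X : Ω → α) {s : Finset α}
    (hs : univ.image X ⊆ s) :
    finEntropy μ X = ∑ y ∈ s, negMulLog (∑ ω with X ω = y, μ ω) := by
  rw [finEntropy, ← sum_neg_distrib]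
  simp only [negMulLog_eq_neg]
  refine sum_subset hs fun y _ hy => ?_
  rw [filter_false_of_mem fun ω _ (h : X ω = y) => hy (h ▸ mem_image_of_mem X (mem_univ ω))]
  simp

theorem comp_le {β : Type*} [DecidableEq β] {μ : Ω → ℝ} (hμ : ∀ ω, 0 ≤ μ ω)
    (X : Ω → α) (f : α → β) :
    finEntropy μ (fun ω => f (X ω)) ≤ finEntropy μ X := by
  have hfib : ∀ z, ∑ ω with f (X ω) = z, μ ω
      = ∑ y ∈ univ.image X with f y = z, ∑ ω with X ω = y, μ ω := fun z => by
    rw [← sum_fiberwise_of_maps_to (g := X) (t := (univ.image X).filter (f · = z))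
      fun ω hω => mem_filter.2 ⟨mem_image_of_mem X (mem_univ ω), (mem_filter.1 hω).2⟩]
    refine sum_congr rfl fun y hy => ?_
    rw [filter_filter]
    exact sum_congr (filter_congr fun ω _ =>
      ⟨fun h => h.2, fun h => ⟨h ▸ (mem_filter.1 hy).2, h⟩⟩) fun _ _ => rfl
  rw [eq_sum_negMulLog_of_subset μ X subset_rfl,
    eq_sum_negMulLog_of_subset μ _ (s := (univ.image X).image f) (by rw [image_image]; rfl)]
  calc ∑ z ∈ (univ.image X).image f, negMulLog (∑ ω with f (X ω) = z, μ ω)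
      ≤ ∑ z ∈ (univ.image X).image f,
          ∑ y ∈ univ.image X with f y = z, negMulLog (∑ ω with X ω = y, μ ω) :=
        sum_le_sum fun z _ => hfib z ▸ negMulLog_sum_le _ fun y _ => sum_nonneg fun ω _ => hμ ω
    _ = _ := sum_fiberwise_of_maps_to (fun y hy => mem_image_of_mem f hy) _

end finEntropy

theorem natCard_restrict_fibers {ι κ β : Type*} [Fintype κ] (c : ι → κ)
    (P : ∀ k, ({i // c i = k} → β) → Prop) :
    Nat.card {A : ι → β // ∀ k, P k fun x => A x} = ∏ k, Nat.card {u // P k u} := by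
  let e : (ι → β) ≃ ∀ k, ({i // c i = k} → β) :=
    { toFun := fun A k x => A x
      invFun := fun g i => g (c i) ⟨i, rfl⟩
      left_inv := fun _ => rfl
      right_inv := fun g => by ext k ⟨i, rfl⟩; rfl }
  rw [← Nat.card_pi]
  exact Nat.card_congr ((e.subtypeEquiv fun _ => Iff.rfl).trans Equiv.subtypePiEquivPi)

theorem natCard_boolFun_card_true_eq {σ : Type*} [Fintype σ] (d : ℕ) :
    Nat.card {u : σ → Bool // #{x | u x} = d} = (Fintype.card σ).choose d := by
  classical
  let e : {u : σ → Bool // #{x | u x} = d} ≃ {t : Finset σ // #t = d} :=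
    { toFun := fun u => ⟨univ.filter fun x => u.1 x, u.2⟩
      invFun := fun t => ⟨fun x => decide (x ∈ t.1), by simpa using t.2⟩
      left_inv := fun u => by ext x; simp
      right_inv := fun t => by ext x; simp }
  rw [Nat.card_congr e, Nat.card_eq_fintype_card, Fintype.card_finset_len]

theorem natCard_restrict_fibers_div_two_pow {ι κ : Type*} [Fintype ι] [Fintype κ] (c : ι → κ)
    (P : ∀ k, ({i // c i = k} → Bool) → Prop) :
    (Nat.card {A : ι → Bool // ∀ k, P k fun x => A x} : ℝ) / 2 ^ Fintype.card ι
      = ∏ k, (Nat.card {u // P k u} : ℝ) / 2 ^ Nat.card {i // c i = k} := by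
  have hcard : Fintype.card ι = ∑ k, Nat.card {i // c i = k} := by
    rw [← Nat.card_eq_fintype_card, ← Nat.card_congr (Equiv.sigmaFiberEquiv c), Nat.card_sigma]
  rw [natCard_restrict_fibers, hcard, ← prod_pow_eq_pow_sum, Nat.cast_prod, prod_div_distrib]

section Blocks

variable {ι κ : Type*}

/-- Presents pairwise disjoint blocks as the fibres of a single map. -/
noncomputable def blockOf (B : κ → Finset ι) (i : ι) : Option κ :=
  open Classical in if h : ∃ j, i ∈ B j then some h.choose else none

theorem blockOf_eq_some_iff {B : κ → Finset ι} (hB : Pairwise (Disjoint on B)) {i : ι} {j : κ} :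
    blockOf B i = some j ↔ i ∈ B j := by
  unfold blockOf
  split_ifs with h
  · rw [Option.some_inj]
    refine ⟨fun hj => hj ▸ h.choose_spec, fun hi => ?_⟩
    by_contra hne
    exact disjoint_left.1 (hB hne) h.choose_spec hi
  · exact iff_of_false (by simp) fun hi => h ⟨j, hi⟩

theorem natCard_blockOf_eq_some {B : κ → Finset ι} (hB : Pairwise (Disjoint on B)) (j : κ) :
    Nat.card {i // blockOf B i = some j} = #(B j) := by
  rw [← Nat.card_eq_finsetCard]
  exact Nat.card_congr (Equiv.subtypeEquivRight fun i => blockOf_eq_some_iff hB)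

variable [Fintype ι] [DecidableEq ι] [Fintype κ]

theorem card_filter_card_true_blocks_div {B : κ → Finset ι} (hB : Pairwise (Disjoint on B))
    (d : κ → ℕ) :
    (#{A : ι → Bool | ∀ j, #{i ∈ B j | A i} = d j} : ℝ) / 2 ^ Fintype.card ι
      = ∏ j, ((#(B j)).choose (d j) : ℝ) / 2 ^ #(B j) := by
  classical
  let P (k : Option κ) (u : {i // blockOf B i = k} → Bool) : Prop :=
    ∀ j, k = some j → #{x | u x} = d j
  have hcount : ∀ (A : ι → Bool) j,
      #{x : {i // blockOf B i = some j} | A x} = #{i ∈ B j | A i} := fun A j => by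
    rw [← Fintype.card_subtype, Fintype.card_congr (Equiv.subtypeSubtypeEquivSubtypeInter
      (fun i => blockOf B i = some j) (fun i => A i = true)), Fintype.card_subtype]
    congr 1
    ext i
    simp [blockOf_eq_some_iff hB]
  have hP : ∀ A : ι → Bool, (∀ j, #{i ∈ B j | A i} = d j) ↔ ∀ k, P k fun x => A x := fun A => by
    simp only [P, ← hcount]
    exact ⟨fun h k j hk => by subst hk; exact h j, fun h j => h (some j) j rfl⟩
  have hnone : Nat.card {u // P none u} = 2 ^ Nat.card {i // blockOf B i = none} := by
    rw [Nat.card_congr (Equiv.subtypeUnivEquiv fun u j h => absurd h (Option.some_ne_none j).symm),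
      Nat.card_fun, Nat.card_eq_fintype_card (α := Bool), Fintype.card_bool]
  have hsome : ∀ j, Nat.card {u // P (some j) u} = (#(B j)).choose (d j) := fun j => by
    rw [Nat.card_congr (Equiv.subtypeEquivRight fun u => ⟨fun h => h j rfl,
      fun h j' hj => Option.some_inj.1 hj ▸ h⟩), natCard_boolFun_card_true_eq,
      ← Nat.card_eq_fintype_card, natCard_blockOf_eq_some hB]
  rw [← Fintype.card_subtype, ← Nat.card_eq_fintype_card,
    Nat.card_congr (Equiv.subtypeEquivRight hP), natCard_restrict_fibers_div_two_pow,
    Fintype.prod_option, hnone]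
  simp only [hsome, natCard_blockOf_eq_some hB]
  push_cast
  rw [div_self (by positivity), one_mul]

theorem sum_range_choose_div_two_pow (m : ℕ) :
    ∑ i ∈ range (m + 1), (m.choose i : ℝ) / 2 ^ m = 1 := by
  rw [← sum_div, ← Nat.cast_sum, Nat.sum_range_choose]
  push_cast
  exact div_self (by positivity)

theorem finEntropy_card_true_blocks [DecidableEq κ] {B : κ → Finset ι}
    (hB : Pairwise (Disjoint on B)) :
    finEntropy (fun _ : ι → Bool => ((2 : ℝ) ^ Fintype.card ι)⁻¹) (fun A j => #{i ∈ B j | A i})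
      = ∑ j, binEnt #(B j) := by
  have himg : univ.image (fun (A : ι → Bool) j => #{i ∈ B j | A i})
      ⊆ Fintype.piFinset fun j => range (#(B j) + 1) := by
    simp only [image_subset_iff, Fintype.mem_piFinset, mem_range, Nat.lt_succ_iff]
    exact fun A _ j => card_filter_le _ _
  rw [finEntropy.eq_sum_negMulLog_of_subset _ _ himg]
  simp only [sum_const, nsmul_eq_mul, ← div_eq_mul_inv, funext_iff,
    card_filter_card_true_blocks_div hB]
  rw [sum_piFinset_negMulLog_prod _ _ fun j => sum_range_choose_div_two_pow _]
  simp only [binEnt_eq_sum_negMulLog]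

end Blocks

section Rank

variable {n : ℕ}

theorem card_filter_fin_val_Ico {a b : ℕ} (hb : b ≤ n) :
    #{i : Fin n | a ≤ i ∧ i < b} = b - a := by
  rw [← Nat.card_Ico, ← card_map Fin.valEmbedding]
  congr 1
  ext x
  simp only [mem_map, mem_filter, mem_univ, true_and, Fin.valEmbedding_apply, mem_Ico]
  exact ⟨fun ⟨i, hi, hix⟩ => hix ▸ hi, fun hx => ⟨⟨x, by omega⟩, hx, rfl⟩⟩

theorem rank_zero (A : Fin n → Bool) : rank A 0 = 0 := by
  simp [rank]

theorem rank_sub_rank (A : Fin n → Bool) {a b : ℕ} (hab : a ≤ b) :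
    rank A b - rank A a = #{i ∈ ({i : Fin n | a ≤ i ∧ i < b} : Finset (Fin n)) | A i} := by
  have hsplit :
      rank A b = rank A a + #{i ∈ ({i : Fin n | a ≤ i ∧ i < b} : Finset (Fin n)) | A i} := by
    rw [rank, rank, ← card_union_of_disjoint]
    · congr 1
      ext i
      simp only [mem_filter, mem_univ, true_and, mem_union]
      rw [← or_and_right]
      exact and_congr_left' (by omega)
    · rw [disjoint_left]
      simp only [mem_filter, mem_univ, true_and]
      omega
  omega

end Rank

theorem stmt_6_general (n r m : ℕ) (p : Fin (r + 1) → ℕ)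
    (hp0 : p 0 = 0) (hmono : StrictMono p) (hpn : p (Fin.last r) ≤ n)
    (hgap : ∀ j : Fin r, m ≤ p j.succ - p j.castSucc) :
    finEntropy (fun _ : Fin n → Bool => ((2 : ℝ) ^ n)⁻¹)
        (fun A => fun j : Fin r => rank A (p j.succ)) ≥
      (r : ℝ) * binEnt m := by
  set B : Fin r → Finset (Fin n) := fun j => {i | p j.castSucc ≤ i ∧ i < p j.succ}
  have hB : Pairwise (Disjoint on B) := (pairwise_disjoint_on B).2 fun j k hjk => by
    have := hmono.monotone (Fin.succ_le_castSucc_iff.2 hjk)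
    simp only [B, disjoint_left, mem_filter, mem_univ, true_and]
    omega
  have hcard : ∀ j, #(B j) = p j.succ - p j.castSucc := fun j =>
    card_filter_fin_val_Ico ((hmono.monotone (Fin.le_last _)).trans hpn)
  have hcons : ∀ A : Fin n → Bool,
      (Fin.cons 0 fun j => rank A (p j.succ) : Fin (r + 1) → ℕ) = fun k => rank A (p k) :=
    fun A => funext fun k => Fin.cases (by simp [hp0, rank_zero]) (fun _ => rfl) k
  have hinc : ∀ (A : Fin n → Bool) j, #{i ∈ B j | A i}
      = rank A (p j.succ) - (Fin.cons 0 fun j => rank A (p j.succ) : Fin (r + 1) → ℕ) j.castSucc :=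
    fun A j => by
      rw [hcons]
      exact (rank_sub_rank A (hmono.monotone (Fin.castSucc_le_succ j))).symm
  calc (r : ℝ) * binEnt m = ∑ _j : Fin r, binEnt m := by simp
    _ ≤ ∑ j, binEnt #(B j) := sum_le_sum fun j _ => binEnt_monotone (hcard j ▸ hgap j)
    _ = finEntropy (fun _ : Fin n → Bool => ((2 : ℝ) ^ n)⁻¹) fun A j => #{i ∈ B j | A i} := by
        rw [← finEntropy_card_true_blocks hB, Fintype.card_fin]
    _ ≤ _ := by
        -- the block counts are the increments of the rank vector, with `R(p 0) = 0` prepended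
        simp only [hinc]
        exact finEntropy.comp_le (fun _ => by positivity) _
          fun x j => x j - (Fin.cons 0 x : Fin (r + 1) → ℕ) j.castSucc

/-- For `A` uniform on `{0,1}^n`, `m ≥ 1`, and positions `p₁ < ⋯ < p_r ≤ n`
(with `p₀ = 0`) satisfying `p₁ ≥ m` and `p_j − p_{j−1} ≥ m` for all `j`, the joint
entropy of the rank answers `(R(p₁), …, R(p_r))` is at least `r·h_m`. -/
theorem stmt_6 (n r m : ℕ) (hm : 1 ≤ m) (p : Fin (r + 1) → ℕ)
    (hp0 : p 0 = 0) (hmono : StrictMono p) (hpn : p (Fin.last r) ≤ n)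
    (hgap : ∀ j : Fin r, m ≤ p j.succ - p j.castSucc) :
    finEntropy (fun _ : Fin n → Bool => ((2 : ℝ) ^ n)⁻¹)
        (fun A => fun j : Fin r => rank A (p j.succ)) ≥
      (r : ℝ) * binEnt m :=
  stmt_6_general n r m p hp0 hmono hpn hgap
end

section
/- There is an absolute constant C > 0 such that for every ε ∈ (0, 1/4], every positive integer k, and every random variable Y taking values in {0, 1, …, k} with E[Y] ≤ ε·k, one has E[log₂ binom(k, Y)] ≤ C·ε·log₂(1/ε)·k. -/
/-!
Every term of the binomial expansion of `(ε + (1 - ε)) ^ k = 1` is at most `1`, so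
`binom(k, y) ≤ ε ^ (-y) (1 - ε) ^ (-k)`, i.e. `log₂ binom(k, y) ≤ y log₂ (1/ε) + k log₂ (1/(1-ε))`.
The second term is `O(ε k)`, which for `ε ≤ 1/4` is dominated by `ε k log₂ (1/ε)`; the bound is
affine in `y`, so taking expectations and using `E[Y] ≤ ε k` gives the claim with `C = 3`.
-/

open MeasureTheory

theorem Nat.choose_mul_pow_mul_pow_le_one {p : ℝ} (hp₀ : 0 ≤ p) (hp₁ : p ≤ 1) {k y : ℕ}
    (hy : y ≤ k) : (k.choose y : ℝ) * (p ^ y * (1 - p) ^ (k - y)) ≤ 1 := by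
  have hq : 0 ≤ 1 - p := by linarith
  calc (k.choose y : ℝ) * (p ^ y * (1 - p) ^ (k - y))
      = p ^ y * (1 - p) ^ (k - y) * k.choose y := by ring
    _ ≤ ∑ m ∈ Finset.range (k + 1), p ^ m * (1 - p) ^ (k - m) * k.choose m :=
        Finset.single_le_sum (f := fun m => p ^ m * (1 - p) ^ (k - m) * (k.choose m : ℝ))
          (fun m _ => by positivity) (Finset.mem_range_succ_iff.mpr hy)
    _ = (p + (1 - p)) ^ k := (add_pow p (1 - p) k).symm
    _ = 1 := by rw [add_sub_cancel, one_pow]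

theorem Real.logb_choose_le {b p : ℝ} (hb : 1 < b) (hp₀ : 0 < p) (hp₁ : p < 1) {k y : ℕ}
    (hy : y ≤ k) :
    logb b (k.choose y) ≤ y * logb b (1 / p) + k * logb b (1 / (1 - p)) := by
  have hq : 0 < 1 - p := by linarith
  have hchoose : (k.choose y : ℝ) ≤ (1 / p) ^ y * (1 / (1 - p)) ^ k := by
    have h := Nat.choose_mul_pow_mul_pow_le_one hp₀.le hp₁.le hy
    have hle : (1 - p) ^ k ≤ (1 - p) ^ (k - y) :=
      pow_le_pow_of_le_one hq.le (by linarith) (Nat.sub_le k y)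
    rw [div_pow, div_pow, one_pow, one_pow, div_mul_div_comm, one_mul, le_div_iff₀ (by positivity)]
    calc (k.choose y : ℝ) * (p ^ y * (1 - p) ^ k)
        ≤ (k.choose y : ℝ) * (p ^ y * (1 - p) ^ (k - y)) := by gcongr
      _ ≤ 1 := h
  calc logb b (k.choose y) ≤ logb b ((1 / p) ^ y * (1 / (1 - p)) ^ k) :=
        logb_le_logb_of_le hb (mod_cast Nat.choose_pos hy) hchoose
    _ = y * logb b (1 / p) + k * logb b (1 / (1 - p)) := by
        rw [logb_mul (by positivity) (by positivity), logb_pow, logb_pow]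

theorem Real.logb_two_one_div_one_sub_le {ε : ℝ} (hε₀ : 0 ≤ ε) (hε : ε ≤ 1 / 2) :
    logb 2 (1 / (1 - ε)) ≤ 3 * ε := by
  have hq : 0 < 1 - ε := by linarith
  have hlog : log (1 / (1 - ε)) ≤ 2 * ε := by
    calc log (1 / (1 - ε)) ≤ 1 / (1 - ε) - 1 := log_le_sub_one_of_pos (by positivity)
      _ ≤ 2 * ε := by rw [div_sub_one hq.ne', div_le_iff₀ hq]; nlinarith
  rw [logb, div_le_iff₀ (log_pos one_lt_two)]
  nlinarith [log_two_gt_d9]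

theorem Real.two_le_logb_two_one_div {ε : ℝ} (hε₀ : 0 < ε) (hε : ε ≤ 1 / 4) :
    2 ≤ logb 2 (1 / ε) := by
  rw [le_logb_iff_rpow_le one_lt_two (by positivity), le_div_iff₀ hε₀]
  norm_num
  linarith

theorem Real.logb_two_choose_le {ε : ℝ} (hε₀ : 0 < ε) (hε : ε ≤ 1 / 4) {k y : ℕ} (hy : y ≤ k) :
    logb 2 (k.choose y) ≤ 2 * ε * k * logb 2 (1 / ε) + logb 2 (1 / ε) * y := by
  have hchoose := logb_choose_le one_lt_two hε₀ (by linarith) hy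
  have hq := logb_two_one_div_one_sub_le hε₀.le (by linarith)
  have hL := two_le_logb_two_one_div hε₀ hε
  have hεk : 0 ≤ ε * k := by positivity
  nlinarith

theorem MeasureTheory.integral_le_of_le_add_mul {Ω : Type*} [MeasurableSpace Ω] {μ : Measure Ω}
    [IsProbabilityMeasure μ] {f X : Ω → ℝ} {a b : ℝ} (hX : Integrable X μ) (hf₀ : 0 ≤ f)
    (hf : ∀ ω, f ω ≤ a + b * X ω) : ∫ ω, f ω ∂μ ≤ a + b * ∫ ω, X ω ∂μ := by
  calc ∫ ω, f ω ∂μ ≤ ∫ ω, (a + b * X ω) ∂μ :=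
        integral_mono_of_nonneg (.of_forall hf₀) ((integrable_const a).add (hX.const_mul b))
          (.of_forall hf)
    _ = a + b * ∫ ω, X ω ∂μ := by
        rw [integral_add (integrable_const a) (hX.const_mul b), integral_const, integral_const_mul]
        simp

/-- There is an absolute constant `C > 0` such that for every `ε ∈ (0, 1/4]`, every
positive integer `k`, and every random variable `Y` taking values in `{0, 1, …, k}` with
`E[Y] ≤ ε·k`, one has `E[log₂ binom(k, Y)] ≤ C·ε·log₂(1/ε)·k`. -/
theorem stmt_8 :
    ∃ C : ℝ, 0 < C ∧
      ∀ ε : ℝ, 0 < ε → ε ≤ 1 / 4 →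
      ∀ k : ℕ, 0 < k →
      ∀ (Ω : Type) (_ : MeasurableSpace Ω) (μ : Measure Ω),
        IsProbabilityMeasure μ →
        ∀ Y : Ω → ℕ, Measurable Y → (∀ ω, Y ω ≤ k) →
          (∫ ω, (Y ω : ℝ) ∂μ) ≤ ε * k →
          (∫ ω, Real.logb 2 (k.choose (Y ω)) ∂μ) ≤ C * ε * Real.logb 2 (1 / ε) * k := by
  refine ⟨3, by norm_num, fun ε hε₀ hε k _ Ω _ μ _ Y hY hYk hEY => ?_⟩
  set L := Real.logb 2 (1 / ε)
  have hL : 0 ≤ L := by linarith [Real.two_le_logb_two_one_div hε₀ hε]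
  have hYint : Integrable (fun ω => (Y ω : ℝ)) μ :=
    .of_bound (measurable_from_nat.comp hY).aestronglyMeasurable k
      (.of_forall fun ω => by simpa using hYk ω)
  have hnonneg : 0 ≤ fun ω => Real.logb 2 (k.choose (Y ω)) := fun ω =>
    Real.logb_nonneg one_lt_two (mod_cast Nat.choose_pos (hYk ω))
  calc (∫ ω, Real.logb 2 (k.choose (Y ω)) ∂μ)
      ≤ 2 * ε * k * L + L * ∫ ω, (Y ω : ℝ) ∂μ :=
        integral_le_of_le_add_mul hYint hnonneg fun ω => Real.logb_two_choose_le hε₀ hε (hYk ω)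
    _ ≤ 2 * ε * k * L + L * (ε * k) := by gcongr
    _ = 3 * ε * L * k := by ring
end

section
/- For all a ∈ (0, 1] and p ∈ (0, 1] there exist ε > 0 and c > 0 such that the following holds for every positive integer r. Let Z₁, …, Z_r be independent nonnegative real-valued random variables with Pr[Z_i ≥ a] ≥ p for every i. Then for every event E with Pr[E] ≥ 2^{−ε·r}, the conditional expectation satisfies E[Σ_{i=1}^r Z_i | E] ≥ c·r. -/
open MeasureTheory ProbabilityTheory

open scoped ENNReal

/-! Let `N` be the number of indices with `a ≤ Z i`, so that `a N ≤ ∑ Z i`. As a sum of independent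
indicators with mean at least `p r`, `N` satisfies Hoeffding's bound
`Pr[N ≤ p r / 2] ≤ exp (-p² r / 2)`. With `ε = p² / (4 log 2)` we have `2^(-ε r) = exp (-p² r / 4)`,
so this bad event has probability at most `exp (-p² / 4) Pr[E]`. Hence on a fraction at least
`1 - exp (-p² / 4)` of `E` the sum exceeds `a p r / 2`. -/

section

variable {Ω : Type*} {mΩ : MeasurableSpace Ω} {μ : Measure Ω}

lemma measureReal_sum_le_sum_integral_sub_le_of_iIndepFun [IsProbabilityMeasure μ]
    {ι : Type*} {X : ι → Ω → ℝ} (hind : iIndepFun X μ) (hm : ∀ i, AEMeasurable (X i) μ)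
    (hb : ∀ i, ∀ᵐ ω ∂μ, X i ω ∈ Set.Icc 0 1) (s : Finset ι) {t : ℝ} (ht : 0 ≤ t) :
    μ.real {ω | ∑ i ∈ s, X i ω ≤ ∑ i ∈ s, μ[X i] - t} ≤ Real.exp (-2 * t ^ 2 / s.card) := by
  have hsubG : ∀ i ∈ s, HasSubgaussianMGF (fun ω ↦ μ[X i] - X i ω) (1 / 4) μ := fun i _ ↦ by
    convert (hasSubgaussianMGF_of_mem_Icc (hm i) (hb i)).neg using 1
    · ext ω; simp
    · norm_num
  have hindc : iIndepFun (fun i ω ↦ μ[X i] - X i ω) μ :=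
    hind.comp (g := fun (i : ι) (y : ℝ) ↦ ∫ ω, X i ω ∂μ - y) fun _ ↦
      measurable_const.sub measurable_id
  convert HasSubgaussianMGF.measure_sum_ge_le_of_iIndepFun hindc hsubG ht using 2
  · ext ω
    simp only [Set.mem_ofPred_eq, Finset.sum_sub_distrib]
    constructor <;> intro h <;> linarith
  · simp only [Finset.sum_const, nsmul_eq_mul, NNReal.coe_mul, NNReal.coe_natCast]
    push_cast
    ring

lemma mul_one_sub_mul_measure_le_setLIntegral {f : Ω → ℝ≥0∞} {E : Set Ω}
    (hf : AEMeasurable f (μ.restrict E)) (hE : μ E ≠ ∞) {s q : ℝ≥0∞}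
    (hq : μ {ω | f ω < s} ≤ q * μ E) :
    s * ((1 - q) * μ E) ≤ ∫⁻ ω in E, f ω ∂μ := by
  have hgood : (1 - q) * μ E ≤ μ.restrict E {ω | s ≤ f ω} :=
    calc (1 - q) * μ E = μ E - q * μ E := by
          rw [ENNReal.sub_mul fun _ _ ↦ hE, one_mul]
      _ ≤ μ E - μ {ω | f ω < s} := tsub_le_tsub_left hq _
      _ ≤ μ (E \ {ω | f ω < s}) := le_measure_sdiff
      _ ≤ μ.restrict E {ω | s ≤ f ω} := by
          refine le_trans (measure_mono fun ω hω ↦ ?_) (Measure.le_restrict_apply _ _)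
          exact ⟨(not_lt.mp hω.2 : s ≤ f ω), hω.1⟩
  exact (mul_le_mul_right hgood s).trans (mul_meas_ge_le_lintegral₀ hf s)

lemma measureReal_sum_le_half_le [IsProbabilityMeasure μ] {ι : Type*} [Fintype ι]
    {Z : ι → Ω → ℝ} (hind : iIndepFun Z μ) (hm : ∀ i, Measurable (Z i))
    (hZ0 : ∀ i ω, 0 ≤ Z i ω) {a p : ℝ} (ha : 0 < a) (hp : 0 ≤ p)
    (hZp : ∀ i, p ≤ μ.real {ω | a ≤ Z i ω}) :
    μ.real {ω | ∑ i, Z i ω ≤ a * p * Fintype.card ι / 2} ≤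
      Real.exp (-(p ^ 2 * Fintype.card ι / 2)) := by
  set n : ℝ := (Fintype.card ι : ℝ)
  set X : ι → Ω → ℝ := fun i ↦ {ω | a ≤ Z i ω}.indicator 1
  have hXind : iIndepFun X μ :=
    hind.comp (g := fun _ ↦ (Set.Ici a).indicator 1) fun _ ↦
      measurable_const.indicator measurableSet_Ici
  have hXm : ∀ i, Measurable (X i) := fun i ↦
    measurable_const.indicator (measurableSet_le measurable_const (hm i))
  have hXb : ∀ i ω, X i ω ∈ Set.Icc (0 : ℝ) 1 := fun i ω ↦ by
    by_cases h : a ≤ Z i ω <;> simp [X, h]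
  have haX : ∀ ω, a * ∑ i, X i ω ≤ ∑ i, Z i ω := fun ω ↦ by
    rw [Finset.mul_sum]
    refine Finset.sum_le_sum fun i _ ↦ ?_
    by_cases h : a ≤ Z i ω <;> simp [X, h, hZ0 i ω]
  have hmean : p * n ≤ ∑ i, μ[X i] := by
    calc p * n = ∑ _i : ι, p := by simp [n, mul_comm]
      _ ≤ ∑ i, μ[X i] := Finset.sum_le_sum fun i _ ↦ by
          simpa [X, integral_indicator_one (measurableSet_le measurable_const (hm i))] using hZp i
  have hoeffding := measureReal_sum_le_sum_integral_sub_le_of_iIndepFun hXind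
    (fun i ↦ (hXm i).aemeasurable) (fun i ↦ ae_of_all _ (hXb i)) Finset.univ
    (t := p * n / 2) (by positivity)
  have hexponent : -2 * (p * n / 2) ^ 2 / n = -(p ^ 2 * n / 2) := by
    rcases eq_or_ne n 0 with h | h
    · simp [h]
    · field_simp
  calc _ ≤ μ.real {ω | ∑ i, X i ω ≤ ∑ i, μ[X i] - p * n / 2} :=
        measureReal_mono fun ω (hω : ∑ i, Z i ω ≤ _) ↦ by
          have := haX ω
          simp only [Set.mem_ofPred_eq]
          nlinarith
    _ ≤ _ := hoeffding.trans_eq (congrArg Real.exp hexponent)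

end

lemma two_rpow_neg_div_log_two_mul (x r : ℝ) :
    (2 : ℝ) ^ (-(x / Real.log 2 * r)) = Real.exp (-(x * r)) := by
  rw [Real.rpow_def_of_pos two_pos]
  congr 1
  field_simp

theorem stmt_11_general (a p : ℝ) (ha0 : 0 < a) (hp0 : 0 < p) :
    ∃ ε : ℝ, 0 < ε ∧ ∃ c : ℝ, 0 < c ∧
      ∀ r : ℕ, 0 < r →
      ∀ (Ω : Type) (_ : MeasurableSpace Ω) (μ : Measure Ω),
        IsProbabilityMeasure μ →
      ∀ Z : Fin r → Ω → ℝ,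
        (∀ i, Measurable (Z i)) →
        (∀ i ω, 0 ≤ Z i ω) →
        iIndepFun Z μ →
        (∀ i, ENNReal.ofReal p ≤ μ {ω | a ≤ Z i ω}) →
        ∀ E : Set Ω, MeasurableSet E →
          ENNReal.ofReal ((2 : ℝ) ^ (-(ε * r))) ≤ μ E →
          ENNReal.ofReal (c * r) ≤
            (∫⁻ ω in E, ENNReal.ofReal (∑ i, Z i ω) ∂μ) / μ E := by
  set q := Real.exp (-(p ^ 2 / 4))
  have hq1 : q < 1 := Real.exp_lt_one_iff.mpr (by nlinarith)
  refine ⟨p ^ 2 / 4 / Real.log 2, by positivity, a * p * (1 - q) / 2,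
    by nlinarith [mul_pos ha0 hp0], ?_⟩
  intro r hr Ω _ μ _ Z hm hZ0 hind hZp E _ hμE
  have hμE0 : μ E ≠ 0 :=
    (lt_of_lt_of_le (ENNReal.ofReal_pos.mpr (Real.rpow_pos_of_pos two_pos _)) hμE).ne'
  have hbad : μ {ω | ENNReal.ofReal (∑ i, Z i ω) < ENNReal.ofReal (a * p * r / 2)} ≤
      ENNReal.ofReal q * μ E :=
    calc _ ≤ μ {ω | ∑ i, Z i ω ≤ a * p * r / 2} :=
          measure_mono fun ω hω ↦ (ENNReal.ofReal_lt_ofReal_iff'.mp hω).1.le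
      _ ≤ ENNReal.ofReal (Real.exp (-(p ^ 2 * r / 2))) := by
          rw [← ofReal_measureReal]
          refine ENNReal.ofReal_le_ofReal ?_
          simpa using measureReal_sum_le_half_le hind hm hZ0 ha0 hp0.le fun i ↦
            (ENNReal.ofReal_le_iff_le_toReal (measure_ne_top _ _)).mp (hZp i)
      _ ≤ ENNReal.ofReal (q * 2 ^ (-(p ^ 2 / 4 / Real.log 2 * r))) := by
          have hr1 : (1 : ℝ) ≤ r := by exact_mod_cast hr
          rw [two_rpow_neg_div_log_two_mul, ← Real.exp_add]
          gcongr
          nlinarith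
      _ ≤ ENNReal.ofReal q * μ E := by
          rw [ENNReal.ofReal_mul (Real.exp_pos _).le]
          gcongr
  rw [ENNReal.le_div_iff_mul_le (.inl hμE0) (.inl (measure_ne_top μ E))]
  calc ENNReal.ofReal (a * p * (1 - q) / 2 * r) * μ E =
        ENNReal.ofReal (a * p * r / 2) * ((1 - ENNReal.ofReal q) * μ E) := by
        rw [← ENNReal.ofReal_one, ← ENNReal.ofReal_sub _ (Real.exp_pos _).le, ← mul_assoc,
          ← ENNReal.ofReal_mul (by positivity)]
        congr 2
        ring
    _ ≤ _ := mul_one_sub_mul_measure_le_setLIntegral (by fun_prop) (measure_ne_top μ E) hbad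

/-- For all `a ∈ (0,1]` and `p ∈ (0,1]` there are `ε > 0` and `c > 0` such that for all
`r`: if `Z₁, …, Z_r` are independent nonnegative random variables with
`Pr[Z_i ≥ a] ≥ p` for every `i`, then for every event `E` with `Pr[E] ≥ 2^{−ε·r}` the
conditional expectation satisfies `E[∑ᵢ Z_i | E] ≥ c·r`. -/
theorem stmt_11 (a p : ℝ) (ha0 : 0 < a) (ha1 : a ≤ 1) (hp0 : 0 < p) (hp1 : p ≤ 1) :
    ∃ ε : ℝ, 0 < ε ∧ ∃ c : ℝ, 0 < c ∧
      ∀ r : ℕ, 0 < r →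
      ∀ (Ω : Type) (_ : MeasurableSpace Ω) (μ : Measure Ω),
        IsProbabilityMeasure μ →
      ∀ Z : Fin r → Ω → ℝ,
        (∀ i, Measurable (Z i)) →
        (∀ i ω, 0 ≤ Z i ω) →
        iIndepFun Z μ →
        (∀ i, ENNReal.ofReal p ≤ μ {ω | a ≤ Z i ω}) →
        ∀ E : Set Ω, MeasurableSet E →
          ENNReal.ofReal ((2 : ℝ) ^ (-(ε * r))) ≤ μ E →
          ENNReal.ofReal (c * r) ≤
            (∫⁻ ω in E, ENNReal.ofReal (∑ i, Z i ω) ∂μ) / μ E :=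
  stmt_11_general a p ha0 hp0
end
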